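/- Restricted to the orthogonal complement of the span of the all-ones vector, the Laplacian of a connected undirected graph is positive definite: for every x orthogonal to 1_n with x ≠ 0, xᵀ L x > 0. -/

import Mathlib

/-!
Since `L = B Bᵀ`, the quadratic form is `xᵀ L x = ‖Bᵀ x‖²`, and `(Bᵀ x)ₖ` is the difference of
`x` across the `k`-th edge. So `xᵀ L x = 0` forces `x` to be constant along every edge, hence
constant on the connected graph, and a constant vector orthogonal to `1` vanishes.
-/

open Matrix

theorem Matrix.dotProduct_mul_transpose_self_mulVec {R m n : Type*} [CommSemiring R]
    [Fintype m] [Fintype n] (B : Matrix m n R) (x : m → R) :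
    x ⬝ᵥ (B * Bᵀ) *ᵥ x = (Bᵀ *ᵥ x) ⬝ᵥ (Bᵀ *ᵥ x) := by
  rw [← mulVec_mulVec, dotProduct_mulVec, mulVec_transpose]

theorem SimpleGraph.Reachable.eq_of_forall_adj {V α : Type*} {G : SimpleGraph V} {f : V → α}
    (hf : ∀ i j, G.Adj i j → f i = f j) {u v : V} (huv : G.Reachable u v) : f u = f v := by
  obtain ⟨w⟩ := huv
  induction w with
  | nil => rfl
  | cons hadj _ ih => exact (hf _ _ hadj).trans ih

theorem eq_zero_of_forall_eq_of_sum_eq_zero {ι M : Type*} [Fintype ι] [AddCommMonoid M]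
    [IsAddTorsionFree M] {x : ι → M} (hconst : ∀ i j, x i = x j) (hsum : ∑ i, x i = 0) :
    x = 0 := by
  funext i
  have hcard : Fintype.card ι ≠ 0 := (Fintype.card_pos_iff.2 ⟨i⟩).ne'
  rw [Fintype.sum_congr _ _ (fun j => hconst j i), Finset.sum_const, Finset.card_univ] at hsum
  exact (nsmul_eq_zero_iff_right hcard).1 hsum

section Incidence

variable {V E R : Type*} [Fintype V] [DecidableEq V] [Ring R] {tail head : E → V}
  {B : Matrix V E R}

theorem incidence_transpose_mulVec_apply
    (hB : ∀ i k, B i k = if i = tail k then 1 else if i = head k then -1 else 0)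
    (x : V → R) {k : E} (hk : tail k ≠ head k) :
    (Bᵀ *ᵥ x) k = x (tail k) - x (head k) := by
  have hcol : (fun i => B i k) = Pi.single (tail k) 1 - Pi.single (head k) 1 := by
    funext i
    simp only [hB, Pi.sub_apply, Pi.single_apply]
    split_ifs <;> simp_all
  change (fun i => B i k) ⬝ᵥ x = _
  rw [hcol, sub_dotProduct, single_one_dotProduct, single_one_dotProduct]

theorem eq_of_adj_of_incidence_transpose_mulVec_eq_zero
    (hB : ∀ i k, B i k = if i = tail k then 1 else if i = head k then -1 else 0)
    {x : V → R} (hker : Bᵀ *ᵥ x = 0) {i j : V}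
    (hij : (SimpleGraph.fromRel fun i j => ∃ k, tail k = i ∧ head k = j).Adj i j) :
    x i = x j := by
  obtain ⟨hne, ⟨k, rfl, rfl⟩ | ⟨k, rfl, rfl⟩⟩ := hij
  · rw [← sub_eq_zero, ← incidence_transpose_mulVec_apply hB x hne, hker, Pi.zero_apply]
  · rw [eq_comm, ← sub_eq_zero, ← incidence_transpose_mulVec_apply hB x hne.symm, hker,
      Pi.zero_apply]

end Incidence

theorem laplacian_posDef_on_ones_complement_general
    (n m : ℕ) (tail head : Fin m → Fin n)
    (B : Matrix (Fin n) (Fin m) ℝ)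
    (hB : ∀ i k, B i k = if i = tail k then 1 else if i = head k then -1 else 0)
    (G : SimpleGraph (Fin n))
    (hG : G = SimpleGraph.fromRel (fun i j => ∃ k, tail k = i ∧ head k = j))
    (hconn : G.Connected)
    (L : Matrix (Fin n) (Fin n) ℝ) (hL : L = B * Bᵀ)
    (x : Fin n → ℝ) (horth : x ⬝ᵥ (fun _ => (1 : ℝ)) = 0) (hx : x ≠ 0) :
    0 < x ⬝ᵥ L.mulVec x := by
  have hker : Bᵀ *ᵥ x ≠ 0 := by
    intro hker
    have hadj : ∀ i j, G.Adj i j → x i = x j := by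
      subst hG
      exact fun i j hij => eq_of_adj_of_incidence_transpose_mulVec_eq_zero hB hker hij
    have hsum : ∑ i, x i = 0 := by simpa [dotProduct] using horth
    have hconst : ∀ i j, x i = x j := fun i j => (hconn i j).eq_of_forall_adj hadj
    exact hx (eq_zero_of_forall_eq_of_sum_eq_zero hconst hsum)
  rw [hL, dotProduct_mul_transpose_self_mulVec]
  simpa only [star_trivial] using dotProduct_star_self_pos_iff.2 hker

/-- For a connected undirected graph on `n` vertices with Laplacian
`L = B * Bᵀ`, the Laplacian is positive definite on the orthogonal complement
of the all-ones vector: for every `x ⟂ 1ₙ` with `x ≠ 0`, `xᵀ L x > 0`. -/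
theorem laplacian_posDef_on_ones_complement
    (n m : ℕ) (tail head : Fin m → Fin n)
    (hne : ∀ k, tail k ≠ head k)
    (B : Matrix (Fin n) (Fin m) ℝ)
    (hB : ∀ i k, B i k = if i = tail k then 1 else if i = head k then -1 else 0)
    (G : SimpleGraph (Fin n))
    (hG : G = SimpleGraph.fromRel (fun i j => ∃ k, tail k = i ∧ head k = j))
    (hconn : G.Connected)
    (L : Matrix (Fin n) (Fin n) ℝ) (hL : L = B * Bᵀ)
    (x : Fin n → ℝ) (horth : x ⬝ᵥ (fun _ => (1 : ℝ)) = 0) (hx : x ≠ 0) :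
    0 < x ⬝ᵥ L.mulVec x :=
  laplacian_posDef_on_ones_complement_general n m tail head B hB G hG hconn L hL x horth hx
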